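/- Let $a > 1$, $m$, $s$, $k$ be positive integers and set $D = m\big(m(s + a(2ams-1)^k)^2 - 2(2ams-1)^k\big)$. Then $D$ is a positive non-square integer and the fundamental period of the regular continued fraction expansion of $\sqrt{D}$ has length $6k + 4$. -/

import Mathlib

/-- The Gauss-map iterates of `x`: `cfX x 0 = x` and
`cfX x (n+1) = 1 / (cfX x n - ⌊cfX x n⌋)`. -/
noncomputable def cfX (x : ℝ) : ℕ → ℝ
  | 0 => x
  | n + 1 => (cfX x n - ⌊cfX x n⌋)⁻¹

/-- The `n`-th partial quotient of the regular continued fraction of `x`. -/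
noncomputable def cfA (x : ℝ) (n : ℕ) : ℤ := ⌊cfX x n⌋

/-- `p` is a period (from index `1` on) of the continued fraction expansion of `x`. -/
def cfPeriod (x : ℝ) (p : ℕ) : Prop :=
  0 < p ∧ ∀ n, 1 ≤ n → cfA x (n + p) = cfA x n

/-!
Put `r = 2ams - 1`, `c = m (s + a r^k)` and `N = 2 m r^k`, so that `D = c² - N`,
`2c = 2ms + aN` and `⌊√D⌋ = c - 1`. The complete quotients of `√D` all have the form
`(P + √D) / Q`; write `α(x, y)` for the state `(P, Q) = (c - x, 2c - x - y)` with `x y = N`.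
Three steps of the algorithm, with partial quotients `1`, `a x - 1`, `a y - 1`, turn `α(x, r y)`
into `α(r x, y)`. From `α(1, N)` at index `1`, `k` such blocks lead to `α(r^k, 2m)`, two steps to
`α(2m, r^k)`, `k` more blocks to `α(2m r^k, 1)`, and two steps back to `α(1, N)` at index
`6k + 5`. The partial quotient at index `6k + 4` is `2c - 2` and all those at indices
`1, …, 6k + 3` are smaller; a period `p < 6k + 4` would carry index `6k + 4` to one of the
indices `1, …, p`.
-/

lemma cfX_add (x : ℝ) (m n : ℕ) : cfX x (m + n) = cfX (cfX x m) n := by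
  induction n with
  | zero => rfl
  | succ n ih => exact congrArg (fun y : ℝ => (y - ⌊y⌋)⁻¹) ih

lemma cfPeriod_of_cfX_eq {x : ℝ} {p : ℕ} (hp : 0 < p) (h : cfX x (p + 1) = cfX x 1) :
    cfPeriod x p := by
  refine ⟨hp, fun n hn => ?_⟩
  obtain ⟨n, rfl⟩ := Nat.exists_eq_add_of_le' hn
  rw [cfA, cfA, show n + 1 + p = p + 1 + n by ring, cfX_add, h, ← cfX_add, add_comm]

lemma cfPeriod.cfA_add_mul {x : ℝ} {p : ℕ} (hp : cfPeriod x p) {n : ℕ} (hn : 1 ≤ n) (t : ℕ) :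
    cfA x (n + t * p) = cfA x n := by
  induction t with
  | zero => simp
  | succ t ih => rw [add_mul, one_mul, ← add_assoc, hp.2 _ (by omega), ih]

lemma cfPeriod.le_of_cfA_ne {x : ℝ} {p L : ℕ} (hp : cfPeriod x p)
    (hL : ∀ n, 1 ≤ n → n < L → cfA x n ≠ cfA x L) : L ≤ p := by
  by_contra! hpL
  have hp0 := hp.1
  set n := (L - 1) % p + 1
  have hLn : L = n + (L - 1) / p * p := by
    have := Nat.mod_add_div (L - 1) p; rw [mul_comm] at this; omega
  have hnp : n ≤ p := Nat.mod_lt _ hp0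
  exact hL n (by omega) (by omega) (by rw [hLn, hp.cfA_add_mul (by omega)])

lemma Int.not_isSquare_of_sq_lt_of_lt_sq {c D : ℤ} (hc : 1 ≤ c) (h₁ : (c - 1) ^ 2 < D)
    (h₂ : D < c ^ 2) : ¬ IsSquare D := by
  rintro ⟨t, rfl⟩
  rw [← sq, sq_lt_sq] at h₁ h₂
  rw [abs_of_nonneg (by omega : (0 : ℤ) ≤ c - 1)] at h₁
  rw [abs_of_nonneg (by omega : (0 : ℤ) ≤ c)] at h₂
  omega

def SqrtCFState (D : ℤ) (n : ℕ) (P Q : ℤ) : Prop :=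
  cfX √(D : ℝ) n = (P + √(D : ℝ)) / Q

lemma SqrtCFState.zero (D : ℤ) : SqrtCFState D 0 0 1 := by
  simp [SqrtCFState, cfX]

lemma SqrtCFState.step {D P Q P' Q' A : ℤ} {n : ℕ} (h : SqrtCFState D n P Q) (hQ : 0 < Q)
    (hP' : 0 ≤ P') (hQ' : 0 < Q') (hsum : P + P' = A * Q) (hnorm : Q * Q' = D - P' ^ 2)
    (hlt : Q' < 2 * P' + Q) :
    cfA √(D : ℝ) n = A ∧ SqrtCFState D (n + 1) P' Q' := by
  have hD : (0 : ℝ) ≤ D := by exact_mod_cast (by nlinarith : 0 ≤ D)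
  have hsq : √(D : ℝ) ^ 2 = D := Real.sq_sqrt hD
  have hQr : (0 : ℝ) < Q := by exact_mod_cast hQ
  have hsumr : (P : ℝ) + P' = A * Q := by exact_mod_cast hsum
  have hnormr : (Q : ℝ) * Q' = D - (P' : ℝ) ^ 2 := by exact_mod_cast hnorm
  -- `P' < √D < P' + Q`, i.e. the fractional part `(√D - P') / Q` of `cfX (√D) n` lies in `(0, 1)`
  have hlow : (P' : ℝ) < √(D : ℝ) := by
    refine (Real.lt_sqrt (by exact_mod_cast hP')).2 ?_
    exact_mod_cast (by nlinarith : P' ^ 2 < D)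
  have hhigh : √(D : ℝ) < P' + Q := by
    refine (Real.sqrt_lt' (by positivity)).2 ?_
    exact_mod_cast (by nlinarith : D < (P' + Q) ^ 2)
  have hfrac : cfX √(D : ℝ) n - A = (√(D : ℝ) - P') / Q := by
    rw [h]; field_simp; linarith
  have hfloor : ⌊cfX √(D : ℝ) n⌋ = A := by
    rw [Int.floor_eq_iff, ← sub_nonneg, ← sub_lt_iff_lt_add', hfrac]
    constructor
    · exact div_nonneg (by linarith) hQr.le
    · rw [div_lt_one hQr]; linarith
  refine ⟨hfloor, ?_⟩
  rw [SqrtCFState, cfX, hfloor, hfrac, inv_div]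
  have hQ'r : (Q' : ℝ) ≠ 0 := by exact_mod_cast hQ'.ne'
  have hne : √(D : ℝ) - P' ≠ 0 := by linarith
  rw [div_eq_div_iff hne hQ'r]
  linear_combination hnormr - hsq

namespace SqrtCFState

variable {a b c r N x y P A : ℤ} {n : ℕ}

lemma step_one (ha : 2 ≤ a) (hb : 1 ≤ b) (hc : 2 * c = 2 * b + a * N) (hx : 1 ≤ x) (hy : 1 ≤ y)
    (hxy : x * y = N) (h : SqrtCFState (c ^ 2 - N) n (c - x) (2 * c - x - y)) :
    cfA √((c ^ 2 - N : ℤ) : ℝ) n = 1 ∧ SqrtCFState (c ^ 2 - N) (n + 1) (c - y) y := by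
  subst hxy
  have hsum : x + y ≤ x * y + 1 := by nlinarith
  have hprod : 2 * (x * y) ≤ a * (x * y) := by nlinarith
  exact h.step (by nlinarith) (by nlinarith) (by omega) (by ring) (by ring) (by nlinarith)

lemma step_to_pivot (ha : 2 ≤ a) (hb : 1 ≤ b) (hc : 2 * c = 2 * b + a * N) (hr : r = 2 * a * b - 1)
    (hx : 1 ≤ x) (hy : r ≤ y) (hxy : x * y = N) (h : SqrtCFState (c ^ 2 - N) n (c - y) y) :
    cfA √((c ^ 2 - N : ℤ) : ℝ) n = a * x - 1 ∧
      SqrtCFState (c ^ 2 - N) (n + 1) (c - 2 * b) (r * x) := by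
  subst hxy hr
  -- `D - (c - 2b)² = (2ab - 1) N`: this is where `r` comes from
  have hr : 3 ≤ 2 * a * b - 1 := by nlinarith
  have hsum : x + y ≤ x * y + 1 := by nlinarith
  have hprod : 2 * (x * y) ≤ a * (x * y) := by nlinarith
  exact h.step (by omega) (by nlinarith) (by nlinarith) (by linear_combination hc)
    (by linear_combination -2 * b * hc) (by nlinarith)

lemma step_from_pivot (ha : 2 ≤ a) (hb : 1 ≤ b) (hc : 2 * c = 2 * b + a * N) (hx : 1 ≤ x)
    (hy : 1 ≤ y) (hxy : x * y = N) (h : SqrtCFState (c ^ 2 - N) n (c - 2 * b) x) :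
    cfA √((c ^ 2 - N : ℤ) : ℝ) n = a * y - 1 ∧
      SqrtCFState (c ^ 2 - N) (n + 1) (c - x) (2 * c - x - y) := by
  subst hxy
  have hsum : x + y ≤ x * y + 1 := by nlinarith
  have hprod : 2 * (x * y) ≤ a * (x * y) := by nlinarith
  exact h.step (by omega) (by nlinarith) (by nlinarith) (by linear_combination hc) (by ring)
    (by nlinarith)

lemma step_turn (ha : 2 ≤ a) (hb : 1 ≤ b) (hc : 2 * c = 2 * b + a * N) (hx : 1 ≤ x)
    (hy : 1 ≤ y) (hxy : x * y = N) (hA : A * y = P + c - y) (h : SqrtCFState (c ^ 2 - N) n P y) :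
    cfA √((c ^ 2 - N : ℤ) : ℝ) n = A ∧ SqrtCFState (c ^ 2 - N) (n + 1) (c - y) (2 * c - y - x) := by
  subst hxy
  have hsum : x + y ≤ x * y + 1 := by nlinarith
  have hprod : 2 * (x * y) ≤ a * (x * y) := by nlinarith
  exact h.step (by omega) (by nlinarith) (by nlinarith) (by linarith) (by ring) (by nlinarith)

lemma block (ha : 2 ≤ a) (hb : 1 ≤ b) (hc : 2 * c = 2 * b + a * N) (hr : r = 2 * a * b - 1)
    (hx : 1 ≤ x) (hy : 1 ≤ y) (hxy : x * (r * y) = N)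
    (h : SqrtCFState (c ^ 2 - N) n (c - x) (2 * c - x - r * y)) :
    SqrtCFState (c ^ 2 - N) (n + 3) (c - r * x) (2 * c - r * x - y) ∧
      ∀ i < 3, cfA √((c ^ 2 - N : ℤ) : ℝ) (n + i) < 2 * c - 2 := by
  have hr3 : 3 ≤ r := by nlinarith
  have hry : 3 ≤ r * y := by nlinarith
  have hrx : 3 ≤ r * x := by nlinarith
  have hx3 : 3 * x ≤ N := by rw [← hxy]; nlinarith
  have hy3 : 3 * y ≤ N := by rw [← hxy]; nlinarith
  obtain ⟨hA₀, h₁⟩ := step_one ha hb hc hx (by nlinarith) hxy h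
  obtain ⟨hA₁, h₂⟩ := step_to_pivot ha hb hc hr hx (by nlinarith) hxy h₁
  obtain ⟨hA₂, h₃⟩ := step_from_pivot ha hb hc (by nlinarith) hy (by rw [← hxy]; ring) h₂
  refine ⟨h₃, fun i hi => ?_⟩
  interval_cases i
  · rw [add_zero, hA₀]; nlinarith
  · rw [hA₁]; nlinarith [mul_le_mul_of_nonneg_left hx3 (by omega : (0 : ℤ) ≤ a)]
  · rw [hA₂]; nlinarith [mul_le_mul_of_nonneg_left hy3 (by omega : (0 : ℤ) ≤ a)]

lemma blocks (ha : 2 ≤ a) (hb : 1 ≤ b) (hc : 2 * c = 2 * b + a * N) (hr : r = 2 * a * b - 1)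
    (k : ℕ) (hx : 1 ≤ x) (hy : 1 ≤ y) (hxy : x * (r ^ k * y) = N)
    (h : SqrtCFState (c ^ 2 - N) n (c - x) (2 * c - x - r ^ k * y)) :
    SqrtCFState (c ^ 2 - N) (n + 3 * k) (c - r ^ k * x) (2 * c - r ^ k * x - y) ∧
      ∀ i < 3 * k, cfA √((c ^ 2 - N : ℤ) : ℝ) (n + i) < 2 * c - 2 := by
  induction k generalizing x n with
  | zero => simpa using h
  | succ k ih =>
    have hr1 : 1 ≤ r := by nlinarith
    rw [show r ^ (k + 1) * y = r * (r ^ k * y) by ring] at h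
    have hrky : 1 ≤ r ^ k * y := one_le_mul_of_one_le_of_one_le (one_le_pow₀ hr1) hy
    obtain ⟨h₁, hbelow₁⟩ := block ha hb hc hr hx hrky (by rw [← hxy]; ring) h
    obtain ⟨h₂, hbelow₂⟩ := ih (by nlinarith) (by rw [← hxy]; ring) h₁
    rw [show r ^ k * (r * x) = r ^ (k + 1) * x by ring, add_assoc,
      show 3 + 3 * k = 3 * (k + 1) by ring] at h₂
    refine ⟨h₂, fun i hi => ?_⟩
    rcases lt_or_ge i 3 with hi3 | hi3
    · exact hbelow₁ i hi3
    · obtain ⟨j, rfl⟩ := Nat.exists_eq_add_of_le hi3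
      rw [← add_assoc]
      exact hbelow₂ j (by omega)

lemma half_period (ha : 2 ≤ a) (hb : 1 ≤ b) (hc : 2 * c = 2 * b + a * N)
    (hr : r = 2 * a * b - 1) (k : ℕ) (hx : 1 ≤ x) (hy : 1 ≤ y) (hxy : x * (r ^ k * y) = N)
    (hA : A * y = 2 * (c - y)) (h : SqrtCFState (c ^ 2 - N) n (c - x) (2 * c - x - r ^ k * y)) :
    SqrtCFState (c ^ 2 - N) (n + (3 * k + 2)) (c - y) (2 * c - y - r ^ k * x) ∧
      cfA √((c ^ 2 - N : ℤ) : ℝ) (n + (3 * k + 1)) = A ∧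
      ∀ i < 3 * k + 1, cfA √((c ^ 2 - N : ℤ) : ℝ) (n + i) < 2 * c - 2 := by
  have hrk : 1 ≤ r ^ k := one_le_pow₀ (by nlinarith)
  have hrkx : 1 ≤ r ^ k * x := one_le_mul_of_one_le_of_one_le hrk hx
  have hN : 1 ≤ N := hxy ▸ one_le_mul_of_one_le_of_one_le hx (one_le_mul_of_one_le_of_one_le hrk hy)
  obtain ⟨h₁, hbelow⟩ := blocks ha hb hc hr k hx hy hxy h
  obtain ⟨hA₁, h₂⟩ := step_one ha hb hc hrkx hy (by rw [← hxy]; ring) h₁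
  obtain ⟨hA₂, h₃⟩ := step_turn (A := A) ha hb hc hrkx hy (by rw [← hxy]; ring) (by linarith) h₂
  refine ⟨h₃, hA₂, fun i hi => ?_⟩
  rcases lt_or_ge i (3 * k) with hi' | hi'
  · exact hbelow i hi'
  · rw [show i = 3 * k by omega, hA₁]
    nlinarith

end SqrtCFState

lemma sqrt_cf_orbit {a m s r c : ℤ} (ha : 2 ≤ a) (hm : 1 ≤ m) (hs : 1 ≤ s) (k : ℕ)
    (hr : r = 2 * a * m * s - 1) (hc : c = m * (s + a * r ^ k)) :
    cfX √((c ^ 2 - 2 * m * r ^ k : ℤ) : ℝ) (6 * k + 4 + 1) =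
        cfX √((c ^ 2 - 2 * m * r ^ k : ℤ) : ℝ) 1 ∧
      cfA √((c ^ 2 - 2 * m * r ^ k : ℤ) : ℝ) (6 * k + 4) = 2 * c - 2 ∧
      ∀ n, 1 ≤ n → n < 6 * k + 4 → cfA √((c ^ 2 - 2 * m * r ^ k : ℤ) : ℝ) n < 2 * c - 2 := by
  set N := 2 * m * r ^ k with hN
  have hb : 1 ≤ m * s := one_le_mul_of_one_le_of_one_le hm hs
  have hc' : 2 * c = 2 * (m * s) + a * N := by rw [hc, hN]; ring
  have hr' : r = 2 * a * (m * s) - 1 := by rw [hr]; ring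
  have hrk : 1 ≤ r ^ k := one_le_pow₀ (by nlinarith)
  have hsark : 1 ≤ s + a * r ^ k := by nlinarith
  have hm2 : (1 : ℤ) ≤ 2 * m := by omega
  obtain ⟨-, h₁⟩ := SqrtCFState.step_turn (A := c - 1) (x := r ^ k * (2 * m)) ha hb hc'
    (by nlinarith) le_rfl (by rw [hN]; ring) (by ring) (SqrtCFState.zero _)
  obtain ⟨h₂, hA₂, hbelow₂⟩ := SqrtCFState.half_period (A := s + a * r ^ k - 2) ha hb hc' hr' k
    le_rfl hm2 (by rw [hN]; ring) (by rw [hc]; ring) h₁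
  obtain ⟨h₃, hA₃, hbelow₃⟩ := SqrtCFState.half_period (A := 2 * c - 2) ha hb hc' hr' k
    hm2 le_rfl (by rw [hN]; ring) (by ring) h₂
  refine ⟨?_, ?_, fun n hn₁ hn₂ => ?_⟩
  · rw [show 6 * k + 4 + 1 = 0 + 1 + (3 * k + 2) + (3 * k + 2) by ring]
    exact h₃.trans h₁.symm
  · rwa [show 6 * k + 4 = 0 + 1 + (3 * k + 2) + (3 * k + 1) by ring]
  obtain ⟨i, rfl⟩ := Nat.exists_eq_add_of_le' hn₁
  rcases lt_or_ge i (3 * k + 1) with hi | hi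
  · rw [add_comm]; exact hbelow₂ i hi
  obtain rfl | hi' := eq_or_lt_of_le hi
  · rw [show 3 * k + 1 + 1 = 0 + 1 + (3 * k + 1) by ring, hA₂, hc]; nlinarith
  · obtain ⟨j, rfl⟩ := Nat.exists_eq_add_of_lt hi'
    rw [show 3 * k + 1 + j + 1 + 1 = 0 + 1 + (3 * k + 2) + j by ring]
    exact hbelow₃ j (by omega)

theorem period_t1b_general (a m s k : ℕ) (ha : 1 < a) (hm : 0 < m) (hs : 0 < s) :
    let r : ℤ := 2 * a * m * s - 1
    let D : ℤ := m * (m * ((s : ℤ) + a * r ^ k) ^ 2 - 2 * r ^ k)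
    0 < D ∧ ¬ IsSquare D ∧
      IsLeast {p : ℕ | cfPeriod (Real.sqrt (D : ℝ)) p} (6 * k + 4) := by
  intro r D
  set c : ℤ := m * (s + a * r ^ k) with hc
  have hD : D = c ^ 2 - 2 * m * r ^ k := by ring
  have ha' : (2 : ℤ) ≤ a := by exact_mod_cast ha
  have hm' : (1 : ℤ) ≤ m := by exact_mod_cast hm
  have hs' : (1 : ℤ) ≤ s := by exact_mod_cast hs
  obtain ⟨hperiod, hlast, hbelow⟩ := sqrt_cf_orbit ha' hm' hs' k rfl hc
  rw [← hD] at hperiod hlast hbelow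
  have hr : 1 ≤ r := by
    have := one_le_mul_of_one_le_of_one_le hm' hs'
    show 1 ≤ 2 * (a : ℤ) * m * s - 1
    nlinarith
  have hrk : 1 ≤ r ^ k := one_le_pow₀ hr
  have hmrk : 1 ≤ m * r ^ k := one_le_mul_of_one_le_of_one_le hm' hrk
  have hc2 : 1 + 2 * (m * r ^ k) ≤ c := by nlinarith
  have hlow : (c - 1) ^ 2 < D := by nlinarith
  have hhigh : D < c ^ 2 := by nlinarith
  refine ⟨by nlinarith, Int.not_isSquare_of_sq_lt_of_lt_sq (by nlinarith) hlow hhigh,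
    cfPeriod_of_cfX_eq (by omega) hperiod, fun p hp => hp.le_of_cfA_ne fun n hn₁ hn₂ => ?_⟩
  exact ((hbelow n hn₁ hn₂).trans_eq hlast.symm).ne

/-- Theorem t1b: for `a > 1` and
`D = m(m(s + a(2ams-1)^k)^2 - 2(2ams-1)^k)`, `D` is a positive non-square
integer and the fundamental period of the continued fraction of `√D` has
length `6k + 4`. -/
theorem period_t1b (a m s k : ℕ) (ha : 1 < a) (hm : 0 < m) (hs : 0 < s)
    (hk : 0 < k) :
    let r : ℤ := 2 * a * m * s - 1
    let D : ℤ := m * (m * ((s : ℤ) + a * r ^ k) ^ 2 - 2 * r ^ k)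
    0 < D ∧ ¬ IsSquare D ∧
      IsLeast {p : ℕ | cfPeriod (Real.sqrt (D : ℝ)) p} (6 * k + 4) :=
  period_t1b_general a m s k ha hm hs
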